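/- arXiv:1909.00391 — 6 statements merged into one kernel-verified Lean document; each statement's English description precedes it below -/
import Mathlib

section
/- Let A be a complex associative algebra, let τ : A → ℂ be a linear functional which is tracial, i.e. τ(ab) = τ(ba) for all a, b ∈ A, and let Q : A → A be a linear map such that τ ∘ Q = τ and Q(x ∘ Q(y)) = Q(x) ∘ Q(y) for all x, y ∈ A. Then τ(Q(x)·y) = τ(x·Q(y)) for all x, y ∈ A (i.e. Q is selfadjoint with respect to τ). -/
/-- A trace-preserving Jordan conditional expectation (modular map) on a complex
associative algebra is selfadjoint with respect to a tracial functional `τ`.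
Here the Jordan product is `x ∘ y = (x*y + y*x)/2`. -/
theorem trace_preserving_modular_selfadjoint
    {A : Type*} [Ring A] [Algebra ℂ A]
    (τ : A →ₗ[ℂ] ℂ) (htrace : ∀ a b : A, τ (a * b) = τ (b * a))
    (Q : A →ₗ[ℂ] A) (hτQ : ∀ a : A, τ (Q a) = τ a)
    (hmod : ∀ x y : A,
      Q ((2 : ℂ)⁻¹ • (x * Q y + Q y * x)) = (2 : ℂ)⁻¹ • (Q x * Q y + Q y * Q x)) :
    ∀ x y : A, τ (Q x * y) = τ (x * Q y) := by
  have key : ∀ x y : A, τ (x * Q y) = τ (Q x * Q y) := by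
    intro x y
    have h := congrArg τ (hmod x y)
    rw [hτQ, map_smul, map_smul, map_add, map_add,
        htrace (Q y) x, htrace (Q y) (Q x)] at h
    have h2 : (2 : ℂ)⁻¹ * (2 * τ (x * Q y)) = (2 : ℂ)⁻¹ * (2 * τ (Q x * Q y)) := by
      ring_nf
      ring_nf at h
      simpa using h
    field_simp at h2
    exact h2
  intro x y
  rw [htrace (Q x) y, key y x, htrace (Q y) (Q x), key x y]
end

section
/- Let H be a complex Hilbert space and let M be a von Neumann algebra acting on H. Let Q : M → M be a ℂ-linear map which is continuous for the weak operator topology, unital (Q(1) = 1), positive (0 ≤ x implies 0 ≤ Q(x)), faithful (0 ≤ x and Q(x) = 0 imply x = 0), and a projection (Q ∘ Q = Q). Then Q(x ∘ Q(y)) = Q(x) ∘ Q(y) for all x, y ∈ M, and the range of Q is closed under the star operation and under the Jordan product ∘. -/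
/-!
A unital positive map `Q` satisfies Kadison's inequality `Q(a)² ≤ Q(a²)` for selfadjoint `a`.
For `0 ≤ b ≤ 1` the Bernstein polynomials `B_{n,ν}(b)` form a positive partition of unity whose
first two moments are `b` and `b² + (b - b²)/n`; the operator Jensen inequality for their images
under `Q` gives `Q(b)² ≤ Q(b²) + (Q(b) - Q(b²))/n`, and `n → ∞`. A general selfadjoint `a` is an
affine image of such a `b`, and the defect `Q(a²) - Q(a)²` scales quadratically.

If moreover `Q` is a faithful projection and `a = Q(a)` is selfadjoint, then `Q(a²) - a² ≥ 0` is
annihilated by `Q`, so `Q(a²) = a²`. The defect at `x + t a` is then affine in the real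
parameter `t` with linear coefficient `Q(x a + a x) - (Q(x) a + a Q(x))`; being nonnegative for
all `t`, that coefficient vanishes. Real and imaginary parts extend this to all `x` and `a`.
-/

open scoped InnerProductSpace

/-- The weak operator topology on (the underlying star-subalgebra of) a von Neumann
algebra `M` acting on `H`: the topology induced by the maps `x ↦ ⟪x ξ, η⟫`. -/
noncomputable def vonNeumannWOT {H : Type*} [NormedAddCommGroup H] [InnerProductSpace ℂ H]
    [CompleteSpace H] (M : VonNeumannAlgebra H) :
    TopologicalSpace M.toStarSubalgebra :=
  TopologicalSpace.induced
    (fun x => fun p : H × H => (inner ℂ ((x : H →L[ℂ] H) p.1) p.2 : ℂ)) inferInstance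

open Polynomial Filter Topology ComplexStarModule

section OrderedModule

variable {E : Type*} [AddCommGroup E] [PartialOrder E] [Module ℝ E]
  [PosSMulMono ℝ E] [TopologicalSpace E] [ContinuousAdd E] [ContinuousSMul ℝ E]
  [ClosedIciTopology E]

lemma nonneg_of_forall_nonneg_add_natCast_smul {x e : E}
    (h : ∀ n : ℕ, 0 < n → 0 ≤ x + (n : ℝ) • e) : 0 ≤ e := by
  have hlim : Tendsto (fun n : ℕ => (n : ℝ)⁻¹ • x + e) atTop (𝓝 e) := by
    simpa using ((tendsto_inv_atTop_zero (𝕜 := ℝ) |>.comp tendsto_natCast_atTop_atTop).smul_const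
      x).add_const e
  refine ge_of_tendsto hlim ((eventually_gt_atTop 0).mono fun n hn => ?_)
  have hn' : (0 : ℝ) < n := by exact_mod_cast hn
  simpa [smul_add, smul_smul, hn'.ne'] using smul_nonneg (inv_nonneg.mpr hn'.le) (h n hn)

lemma eq_zero_of_forall_nonneg_add_smul [IsOrderedAddMonoid E] {x e : E}
    (h : ∀ t : ℝ, 0 ≤ x + t • e) : e = 0 := by
  refine le_antisymm ?_ (nonneg_of_forall_nonneg_add_natCast_smul fun n _ => h n)
  refine neg_nonneg.mp (nonneg_of_forall_nonneg_add_natCast_smul (x := x) fun n _ => ?_)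
  simpa using h (-n)

end OrderedModule

lemma mul_self_sum_smul_le_sum_sq_smul {ι R A : Type*} [CommSemiring R] [Star R]
    [TrivialStar R] [Ring A] [StarRing A] [PartialOrder A] [StarOrderedRing A] [Algebra R A]
    [StarModule R A] (s : Finset ι) (c : ι → R) (q : ι → A) (hq : ∀ i ∈ s, 0 ≤ q i)
    (hsum : ∑ i ∈ s, q i = 1) :
    (∑ i ∈ s, c i • q i) * (∑ i ∈ s, c i • q i) ≤ ∑ i ∈ s, c i ^ 2 • q i := by
  set m := ∑ i ∈ s, c i • q i
  have hm : IsSelfAdjoint m :=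
    isSelfAdjoint_sum s fun i hi => (IsSelfAdjoint.all (c i)).smul (.of_nonneg (hq i hi))
  have hterm : ∀ i, star (c i • 1 - m) * q i * (c i • 1 - m)
      = c i ^ 2 • q i - c i • (q i * m) - c i • (m * q i) + m * q i * m := fun i => by
    simp only [star_sub, star_smul, star_trivial, star_one, hm.star_eq, sub_mul, mul_sub,
      smul_mul_assoc, mul_smul_comm, one_mul, mul_one, smul_sub, smul_smul, sq]
    abel
  have hleft : ∑ i ∈ s, c i • (q i * m) = m * m := by
    simp only [← smul_mul_assoc, ← Finset.sum_mul, m]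
  have hright : ∑ i ∈ s, c i • (m * q i) = m * m := by
    simp only [← mul_smul_comm, ← Finset.mul_sum, m]
  have hmid : ∑ i ∈ s, m * q i * m = m * m := by
    rw [← Finset.sum_mul, ← Finset.mul_sum, hsum, mul_one]
  have key : ∑ i ∈ s, star (c i • 1 - m) * q i * (c i • 1 - m)
      = ∑ i ∈ s, c i ^ 2 • q i - m * m := by
    simp only [hterm, Finset.sum_add_distrib, Finset.sum_sub_distrib, hleft, hright, hmid]
    abel
  exact sub_nonneg.mp (key ▸ Finset.sum_nonneg fun i hi => star_left_conjugate_nonneg (hq i hi) _)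

lemma bernsteinPolynomial.sum_sq_smul (n : ℕ) :
    ∑ ν ∈ Finset.range (n + 1), (ν : ℝ) ^ 2 • bernsteinPolynomial ℝ n ν
      = (n : ℝ) ^ 2 • X ^ 2 + (n : ℝ) • (X - X ^ 2) := by
  have hsq : ∀ ν : ℕ, (ν : ℝ) ^ 2 = ((ν * (ν - 1) : ℕ) : ℝ) + ν := by
    rintro (_ | ν)
    · simp
    · push_cast [Nat.add_sub_cancel]
      ring
  simp only [hsq, add_smul, Finset.sum_add_distrib, Nat.cast_smul_eq_nsmul,
    bernsteinPolynomial.sum_smul, bernsteinPolynomial.sum_mul_smul]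
  rcases n with _ | n
  · simp
  · simp only [nsmul_eq_mul, Nat.cast_mul, Nat.cast_add, Nat.cast_one, Nat.add_sub_cancel]
    ring

lemma aeval_bernsteinPolynomial_nonneg {A : Type*} [CStarAlgebra A] [PartialOrder A]
    [StarOrderedRing A] {a : A} (h0 : 0 ≤ a) (h1 : a ≤ 1) (n ν : ℕ) :
    0 ≤ aeval a (bernsteinPolynomial ℝ n ν) := by
  rw [← cfc_polynomial _ a]
  refine cfc_nonneg fun x hx => ?_
  have hx1 : x ≤ 1 :=
    (le_algebraMap_iff_spectrum_le (r := (1 : ℝ))).mp (by simpa using h1) x hx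
  simpa [bernstein_apply, bernsteinPolynomial] using
    bernstein_nonneg (n := n) (ν := ν) (x := ⟨x, spectrum_nonneg_of_nonneg h0 hx, hx1⟩)

section Defects

variable {A : Type*} [Ring A] [StarRing A] [Algebra ℂ A] [StarModule ℂ A]
  {S : StarSubalgebra ℂ A} (Q : S →ₗ[ℂ] S)

noncomputable def kadisonDefect (y : S) : S := Q (y * y) - Q y * Q y

noncomputable def jordanDefect (x a : S) : S := Q (x * a + a * x) - (Q x * a + a * Q x)

variable {Q}

lemma kadisonDefect_smul_add_smul_one (hunital : Q 1 = 1) (y : S) (α β : ℝ) :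
    kadisonDefect Q (α • y + β • 1) = α ^ 2 • kadisonDefect Q y := by
  simp only [kadisonDefect, map_add, LinearMap.map_smul_of_tower, hunital, add_mul, mul_add,
    mul_one, one_mul, smul_mul_assoc, mul_smul_comm]
  module

lemma kadisonDefect_add_smul {a : S} (hQa : Q a = a) (hQaa : Q (a * a) = a * a) (x : S) (t : ℝ) :
    kadisonDefect Q (x + t • a) = kadisonDefect Q x + t • jordanDefect Q x a := by
  simp only [kadisonDefect, jordanDefect, add_mul, mul_add, smul_mul_assoc, mul_smul_comm,
    map_add, LinearMap.map_smul_of_tower, hQa, hQaa]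
  module

lemma jordanDefect_add_I_smul_left (u v a : S) :
    jordanDefect Q (u + Complex.I • v) a = jordanDefect Q u a + Complex.I • jordanDefect Q v a := by
  simp only [jordanDefect, add_mul, mul_add, smul_mul_assoc, mul_smul_comm, map_add, map_smul]
  module

lemma jordanDefect_add_I_smul_right (x u v : S) :
    jordanDefect Q x (u + Complex.I • v) = jordanDefect Q x u + Complex.I • jordanDefect Q x v := by
  simp only [jordanDefect, add_mul, mul_add, smul_mul_assoc, mul_smul_comm, map_add, map_smul]
  module

end Defects

section StarSubalgebra

variable {A : Type*} [CStarAlgebra A] [PartialOrder A] [StarOrderedRing A]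
  {S : StarSubalgebra ℂ A} {Q : S →ₗ[ℂ] S}

structure IsUnitalPositiveMap (Q : S →ₗ[ℂ] S) : Prop where
  map_one : Q 1 = 1
  map_nonneg : ∀ x : S, 0 ≤ (x : A) → 0 ≤ (Q x : A)

namespace IsUnitalPositiveMap

lemma isSelfAdjoint_map (hQ : IsUnitalPositiveMap Q) {x : S} (hx : IsSelfAdjoint x) :
    IsSelfAdjoint (Q x) := by
  have hxc : 0 ≤ ((x + ‖(x : A)‖ • 1 : S) : A) := by
    simpa [neg_le_iff_add_nonneg, Algebra.algebraMap_eq_smul_one] using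
      (hx.map S.subtype).neg_algebraMap_norm_le_self
  have hQxc : IsSelfAdjoint (Q (x + ‖(x : A)‖ • 1)) :=
    Subtype.ext (IsSelfAdjoint.of_nonneg (hQ.map_nonneg _ hxc)).star_eq
  have hc : IsSelfAdjoint (‖(x : A)‖ • 1 : S) := (IsSelfAdjoint.all _).smul (.one S)
  simpa [LinearMap.map_smul_of_tower, hQ.map_one] using hQxc.sub hc

lemma map_star (hQ : IsUnitalPositiveMap Q) (x : S) : Q (star x) = star (Q x) := by
  have hre := hQ.isSelfAdjoint_map (ℜ x).prop
  have him := hQ.isSelfAdjoint_map (ℑ x).prop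
  conv_lhs => rw [← realPart_add_I_smul_imaginaryPart x]
  conv_rhs => rw [← realPart_add_I_smul_imaginaryPart x]
  simp [(ℜ x).prop.star_eq, (ℑ x).prop.star_eq, hre.star_eq, him.star_eq]

lemma kadisonDefect_nonneg_of_nonneg_of_le_one (hQ : IsUnitalPositiveMap Q) {b : S}
    (hb0 : 0 ≤ (b : A)) (hb1 : (b : A) ≤ 1) : 0 ≤ (kadisonDefect Q b : A) := by
  set Y : A := ((Q b : S) : A)
  set Z : A := ((Q (b * b) : S) : A)
  set Φ : ℝ[X] →ₗ[ℝ] A :=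
    ((S.subtype.toLinearMap ∘ₗ Q).restrictScalars ℝ) ∘ₗ (aeval b).toLinearMap
  have hΦX : Φ X = Y := by simp [Φ, Y]
  have hΦX2 : Φ (X ^ 2) = Z := by simp [Φ, Z, sq]
  have hpart : ∀ n ν, 0 ≤ Φ (bernsteinPolynomial ℝ n ν) := fun n ν => by
    refine hQ.map_nonneg _ ?_
    change 0 ≤ ((S.subtype : S →ₐ[ℂ] A).restrictScalars ℝ) (aeval b _)
    rw [← aeval_algHom_apply]
    exact aeval_bernsteinPolynomial_nonneg hb0 hb1 n ν
  have hstep : ∀ n : ℕ, 0 < n → 0 ≤ (Y - Z) + (n : ℝ) • (Z - Y * Y) := by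
    intro n hn
    have hjensen := mul_self_sum_smul_le_sum_sq_smul (Finset.range (n + 1)) (fun ν => (ν : ℝ))
      (fun ν => Φ (bernsteinPolynomial ℝ n ν)) (fun ν _ => hpart n ν)
      (by rw [← map_sum, bernsteinPolynomial.sum]; simp [Φ, hQ.map_one])
    have hmean : ∑ ν ∈ Finset.range (n + 1), (ν : ℝ) • bernsteinPolynomial ℝ n ν
        = (n : ℝ) • X := by
      simpa only [Nat.cast_smul_eq_nsmul] using bernsteinPolynomial.sum_smul ℝ n
    simp only [← map_smul, ← map_sum, hmean, bernsteinPolynomial.sum_sq_smul] at hjensen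
    simp only [map_add, map_smul, map_sub, hΦX, hΦX2, smul_mul_smul_comm] at hjensen
    refine nonneg_of_smul_nonneg_of_pos_left ?_ (by exact_mod_cast hn : (0 : ℝ) < n)
    convert sub_nonneg.mpr hjensen using 1
    module
  simpa [kadisonDefect, Y, Z] using nonneg_of_forall_nonneg_add_natCast_smul hstep

lemma kadisonDefect_nonneg (hQ : IsUnitalPositiveMap Q) {a : S} (ha : IsSelfAdjoint a) :
    0 ≤ (kadisonDefect Q a : A) := by
  set c : ℝ := ‖(a : A)‖ + 1
  have hc : 0 < 2 * c := by positivity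
  have hnorm : algebraMap ℝ A ‖(a : A)‖ ≤ c • 1 := by
    rw [Algebra.algebraMap_eq_smul_one]
    exact smul_le_smul_of_nonneg_right (by linarith) zero_le_one
  have hlow : 0 ≤ (a : A) + c • 1 := neg_le_iff_add_nonneg.mp
    ((neg_le_neg hnorm).trans (ha.map S.subtype).neg_algebraMap_norm_le_self)
  have hup : (a : A) + c • 1 ≤ (2 * c) • 1 := by
    rw [mul_smul, two_smul]
    exact add_le_add_left ((ha.map S.subtype).le_algebraMap_norm_self.trans hnorm) _
  set b : S := (2 * c)⁻¹ • (a + c • 1)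
  have hbA : (b : A) = (2 * c)⁻¹ • ((a : A) + c • 1) := rfl
  have hb0 : 0 ≤ (b : A) := hbA ▸ smul_nonneg (inv_nonneg.mpr hc.le) hlow
  have hb1 : (b : A) ≤ 1 := hbA ▸ (inv_smul_le_iff_of_pos hc).mpr hup
  have hab : a = (2 * c) • b + (-c) • 1 := by
    rw [smul_inv_smul₀ hc.ne']
    module
  rw [hab, kadisonDefect_smul_add_smul_one hQ.map_one]
  simpa using
    smul_nonneg (sq_nonneg (2 * c)) (hQ.kadisonDefect_nonneg_of_nonneg_of_le_one hb0 hb1)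

lemma map_mul_self_of_map_eq (hQ : IsUnitalPositiveMap Q)
    (hfaithful : ∀ x : S, 0 ≤ (x : A) → Q x = 0 → x = 0) (hproj : ∀ x, Q (Q x) = Q x)
    {a : S} (ha : IsSelfAdjoint a) (hQa : Q a = a) : Q (a * a) = a * a := by
  have hdef := hQ.kadisonDefect_nonneg ha
  rw [kadisonDefect, hQa] at hdef
  exact sub_eq_zero.mp (hfaithful _ hdef (by rw [map_sub, hproj, sub_self]))

lemma jordanDefect_eq_zero_of_isSelfAdjoint (hQ : IsUnitalPositiveMap Q)
    (hfaithful : ∀ x : S, 0 ≤ (x : A) → Q x = 0 → x = 0) (hproj : ∀ x, Q (Q x) = Q x)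
    {a : S} (ha : IsSelfAdjoint a) (hQa : Q a = a) {x : S} (hx : IsSelfAdjoint x) :
    jordanDefect Q x a = 0 := by
  have hQaa := hQ.map_mul_self_of_map_eq hfaithful hproj ha hQa
  refine Subtype.ext <|
    eq_zero_of_forall_nonneg_add_smul (x := (kadisonDefect Q x : A)) fun t => ?_
  have h := hQ.kadisonDefect_nonneg (hx.add ((IsSelfAdjoint.all t).smul ha))
  rwa [kadisonDefect_add_smul hQa hQaa] at h

lemma jordanDefect_eq_zero (hQ : IsUnitalPositiveMap Q)
    (hfaithful : ∀ x : S, 0 ≤ (x : A) → Q x = 0 → x = 0) (hproj : ∀ x, Q (Q x) = Q x)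
    {a : S} (hQa : Q a = a) (x : S) : jordanDefect Q x a = 0 := by
  have hsa {b y : S} (hb : IsSelfAdjoint b) (hQb : Q b = b) (hy : IsSelfAdjoint y) :=
    hQ.jordanDefect_eq_zero_of_isSelfAdjoint hfaithful hproj hb hQb hy
  have hQstar : Q (star a) = star a := by rw [hQ.map_star, hQa]
  have hre : Q (ℜ a : S) = ℜ a := by
    simp only [realPart_apply_coe, LinearMap.map_smul_of_tower, map_add, hQa, hQstar]
  have him : Q (ℑ a : S) = ℑ a := by
    simp only [imaginaryPart_apply_coe, LinearMap.map_smul_of_tower, map_smul, map_sub, hQa,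
      hQstar]
  rw [← realPart_add_I_smul_imaginaryPart x, ← realPart_add_I_smul_imaginaryPart a]
  simp only [jordanDefect_add_I_smul_left, jordanDefect_add_I_smul_right,
    hsa (ℜ a).prop hre (ℜ x).prop, hsa (ℑ a).prop him (ℜ x).prop,
    hsa (ℜ a).prop hre (ℑ x).prop, hsa (ℑ a).prop him (ℑ x).prop, smul_zero, add_zero]

lemma map_mul_add_mul_of_map_eq (hQ : IsUnitalPositiveMap Q)
    (hfaithful : ∀ x : S, 0 ≤ (x : A) → Q x = 0 → x = 0) (hproj : ∀ x, Q (Q x) = Q x)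
    {a : S} (hQa : Q a = a) (x : S) : Q (x * a + a * x) = Q x * a + a * Q x :=
  sub_eq_zero.mp (hQ.jordanDefect_eq_zero hfaithful hproj hQa x)

end IsUnitalPositiveMap

end StarSubalgebra

theorem faithful_unital_positive_projection_jordan_general
    {H : Type*} [NormedAddCommGroup H] [InnerProductSpace ℂ H] [CompleteSpace H]
    (M : VonNeumannAlgebra H)
    (Q : M.toStarSubalgebra →ₗ[ℂ] M.toStarSubalgebra)
    (hunital : Q 1 = 1)
    (hpos : ∀ x : M.toStarSubalgebra,
      ((x : H →L[ℂ] H)).IsPositive → ((Q x : H →L[ℂ] H)).IsPositive)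
    (hfaithful : ∀ x : M.toStarSubalgebra,
      ((x : H →L[ℂ] H)).IsPositive → Q x = 0 → x = 0)
    (hproj : ∀ x, Q (Q x) = Q x) :
    (∀ x y : M.toStarSubalgebra,
      Q ((2 : ℂ)⁻¹ • (x * Q y + Q y * x)) = (2 : ℂ)⁻¹ • (Q x * Q y + Q y * Q x)) ∧
    (∀ x ∈ Set.range Q, star x ∈ Set.range Q) ∧
    (∀ x ∈ Set.range Q, ∀ y ∈ Set.range Q,
      (2 : ℂ)⁻¹ • (x * y + y * x) ∈ Set.range Q) := by
  simp only [← ContinuousLinearMap.nonneg_iff_isPositive] at hpos hfaithful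
  have hQ : IsUnitalPositiveMap Q := ⟨hunital, hpos⟩
  have hjordan {a : M.toStarSubalgebra} (hQa : Q a = a) (x) :=
    hQ.map_mul_add_mul_of_map_eq hfaithful hproj hQa x
  refine ⟨fun x y => ?_, ?_, ?_⟩
  · rw [map_smul, hjordan (hproj y) x]
  · rintro _ ⟨u, rfl⟩
    exact ⟨star u, hQ.map_star u⟩
  · rintro _ ⟨u, rfl⟩ _ ⟨v, rfl⟩
    refine ⟨(2 : ℂ)⁻¹ • (Q u * Q v + Q v * Q u), ?_⟩
    rw [map_smul, hjordan (hproj v) (Q u), hproj]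

/-- A WOT-continuous faithful unital positive linear projection `Q` on a von Neumann
algebra `M` is a Jordan conditional expectation, and its range is closed under the star
operation and the Jordan product `x ∘ y = (x*y + y*x)/2`. -/
theorem faithful_unital_positive_projection_jordan
    {H : Type*} [NormedAddCommGroup H] [InnerProductSpace ℂ H] [CompleteSpace H]
    (M : VonNeumannAlgebra H)
    (Q : M.toStarSubalgebra →ₗ[ℂ] M.toStarSubalgebra)
    (hcont : @Continuous _ _ (vonNeumannWOT M) (vonNeumannWOT M) Q)
    (hunital : Q 1 = 1)
    (hpos : ∀ x : M.toStarSubalgebra,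
      ((x : H →L[ℂ] H)).IsPositive → ((Q x : H →L[ℂ] H)).IsPositive)
    (hfaithful : ∀ x : M.toStarSubalgebra,
      ((x : H →L[ℂ] H)).IsPositive → Q x = 0 → x = 0)
    (hproj : ∀ x, Q (Q x) = Q x) :
    (∀ x y : M.toStarSubalgebra,
      Q ((2 : ℂ)⁻¹ • (x * Q y + Q y * x)) = (2 : ℂ)⁻¹ • (Q x * Q y + Q y * Q x)) ∧
    (∀ x ∈ Set.range Q, star x ∈ Set.range Q) ∧
    (∀ x ∈ Set.range Q, ∀ y ∈ Set.range Q,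
      (2 : ℂ)⁻¹ • (x * y + y * x) ∈ Set.range Q) :=
  faithful_unital_positive_projection_jordan_general M Q hunital hpos hfaithful hproj
end

section
/- Let X be a real Banach space whose dual space X* is strictly convex. Let P : X → X be a contractive projection (P linear, P ∘ P = P, ‖P(x)‖ ≤ ‖x‖ for all x). If x belongs to the range of P and f ∈ X* satisfies f(x) = ‖x‖² = ‖f‖², then f ∘ P = f, i.e. f belongs to the range of the adjoint projection P*. -/
/-! A duality functional `f` of `x ∈ range P` and `f ∘ P` both have norm at most `‖x‖` and take
the value `‖x‖²` at `x`, so their midpoint does too and has norm at least `‖x‖`. Strict convexity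
of the dual rules out two distinct such functionals. -/

namespace StrongDual

variable {X : Type*} [NormedAddCommGroup X] [NormedSpace ℝ X]

theorem norm_le_norm_of_sq_norm_le_apply {f : StrongDual ℝ X} {x : X} (h : ‖x‖ ^ 2 ≤ f x) :
    ‖x‖ ≤ ‖f‖ := by
  have hfx : f x ≤ ‖f‖ * ‖x‖ := (le_abs_self _).trans (f.le_opNorm x)
  nlinarith [norm_nonneg x, norm_nonneg f]

theorem eq_of_norm_le_of_apply_eq_sq_norm [StrictConvexSpace ℝ (StrongDual ℝ X)]
    {f g : StrongDual ℝ X} {x : X} (hf : ‖f‖ ≤ ‖x‖) (hg : ‖g‖ ≤ ‖x‖)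
    (hfx : f x = ‖x‖ ^ 2) (hgx : g x = ‖x‖ ^ 2) : f = g := by
  by_contra hne
  have hlt : ‖(1 / 2 : ℝ) • f + (1 / 2 : ℝ) • g‖ < ‖x‖ :=
    norm_combo_lt_of_ne hf hg hne (by norm_num) (by norm_num) (by norm_num)
  have hmid : ‖x‖ ≤ ‖(1 / 2 : ℝ) • f + (1 / 2 : ℝ) • g‖ :=
    norm_le_norm_of_sq_norm_le_apply <| by
      simp only [add_apply, smul_apply, hfx, hgx, smul_eq_mul]; linarith
  exact hlt.not_ge hmid

end StrongDual

theorem duality_functional_fixed_by_adjoint_projection_general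
    {X : Type*} [NormedAddCommGroup X] [NormedSpace ℝ X]
    [StrictConvexSpace ℝ (StrongDual ℝ X)]
    (P : X →L[ℝ] X) (hcontr : ∀ z, ‖P z‖ ≤ ‖z‖) (hproj : ∀ z, P (P z) = P z)
    (x : X) (hx : x ∈ Set.range P)
    (f : StrongDual ℝ X) (hfx : f x = ‖x‖ ^ 2) (hf : ‖f‖ = ‖x‖) :
    ∀ z, f (P z) = f z := by
  obtain ⟨y, rfl⟩ := hx
  have hP : ‖P‖ ≤ 1 := P.opNorm_le_bound zero_le_one (by simpa only [one_mul] using hcontr)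
  have hfP : ‖f.comp P‖ ≤ ‖P y‖ :=
    calc ‖f.comp P‖ ≤ ‖f‖ * ‖P‖ := f.opNorm_comp_le P
      _ ≤ ‖f‖ := mul_le_of_le_one_right (norm_nonneg f) hP
      _ = ‖P y‖ := hf
  have hfPx : f.comp P (P y) = ‖P y‖ ^ 2 := by
    rw [ContinuousLinearMap.comp_apply, hproj, hfx]
  exact DFunLike.congr_fun (StrongDual.eq_of_norm_le_of_apply_eq_sq_norm hfP hf.le hfPx hfx)

/-- Let `X` be a real Banach space with strictly convex dual and `P` a contractive
projection on `X`. If `x` is in the range of `P` and `f` is a normalized duality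
functional for `x` (i.e. `f(x) = ‖x‖² = ‖f‖²`), then `f ∘ P = f`. -/
theorem duality_functional_fixed_by_adjoint_projection
    {X : Type*} [NormedAddCommGroup X] [NormedSpace ℝ X] [CompleteSpace X]
    [StrictConvexSpace ℝ (StrongDual ℝ X)]
    (P : X →L[ℝ] X) (hcontr : ∀ z, ‖P z‖ ≤ ‖z‖) (hproj : ∀ z, P (P z) = P z)
    (x : X) (hx : x ∈ Set.range P)
    (f : StrongDual ℝ X) (hfx : f x = ‖x‖ ^ 2) (hf : ‖f‖ = ‖x‖) :
    ∀ z, f (P z) = f z :=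
  duality_functional_fixed_by_adjoint_projection_general P hcontr hproj x hx f hfx hf
end

section
/- Let X be a reflexive real Banach space such that both X and its dual X* are strictly convex. Let P : X → X be a contractive projection (P linear, P ∘ P = P, ‖P(x)‖ ≤ ‖x‖ for all x) and let x ∈ X. Then x belongs to the range of P if and only if there exists f ∈ X* with f(x) = ‖x‖² = ‖f‖² and f ∘ P = f. -/
/-!
If `P x = x`, a norming functional `g` of `x` gives `f = ‖x‖ • (g ∘ P)`, which is `P`-invariant
and, because `P` is contractive, still has norm `‖x‖`. Conversely, if `f` is a `P`-invariant
duality functional of `x`, then `f` takes the value `‖f‖ ‖x‖` both at `x` and at `P x`, which lies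
in the ball of radius `‖x‖`; in a strictly convex space a nonzero functional attains its norm at
most once on a closed ball, so `P x = x`.
-/

section

variable {E : Type*} [NormedAddCommGroup E] [NormedSpace ℝ E]

theorem norm_eq_of_apply_eq_sq_of_norm_le {f : StrongDual ℝ E} {x : E} (hfx : f x = ‖x‖ ^ 2)
    (hf : ‖f‖ ≤ ‖x‖) : ‖f‖ = ‖x‖ := by
  refine le_antisymm hf (not_lt.1 fun hlt => ?_)
  have hx : 0 < ‖x‖ := (norm_nonneg f).trans_lt hlt
  have : ‖x‖ * ‖x‖ ≤ ‖f‖ * ‖x‖ := by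
    rw [← sq, ← hfx]
    exact (le_abs_self _).trans (f.le_opNorm x)
  exact (mul_lt_mul_of_pos_right hlt hx).not_ge this

theorem exists_dual_comp_eq_of_apply_eq_self (P : E →L[ℝ] E) (hcontr : ∀ z, ‖P z‖ ≤ ‖z‖)
    (hproj : ∀ z, P (P z) = P z) {x : E} (hx : P x = x) :
    ∃ f : StrongDual ℝ E, f x = ‖x‖ ^ 2 ∧ ‖f‖ = ‖x‖ ∧ ∀ z, f (P z) = f z := by
  obtain ⟨g, hg, hgx⟩ := exists_dual_vector'' ℝ x
  have hgP : ‖g.comp P‖ ≤ 1 :=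
    ContinuousLinearMap.opNorm_le_bound _ zero_le_one fun z =>
      calc ‖g (P z)‖ ≤ ‖g‖ * ‖P z‖ := g.le_opNorm _
        _ ≤ 1 * ‖z‖ := mul_le_mul hg (hcontr z) (norm_nonneg _) zero_le_one
  have hfx : (‖x‖ • g.comp P) x = ‖x‖ ^ 2 := by simp [hx, hgx, sq]
  refine ⟨‖x‖ • g.comp P, hfx, norm_eq_of_apply_eq_sq_of_norm_le hfx ?_, fun z => by simp [hproj]⟩
  calc ‖‖x‖ • g.comp P‖ = ‖x‖ * ‖g.comp P‖ := by rw [norm_smul, norm_norm]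
    _ ≤ ‖x‖ * 1 := mul_le_mul_of_nonneg_left hgP (norm_nonneg x)
    _ = ‖x‖ := mul_one _

theorem eq_of_apply_eq_norm_mul_of_norm_le [StrictConvexSpace ℝ E] {f : StrongDual ℝ E}
    (hf : f ≠ 0) {x y : E} {r : ℝ} (hx : ‖x‖ ≤ r) (hy : ‖y‖ ≤ r) (hfx : f x = ‖f‖ * r)
    (hfy : f y = ‖f‖ * r) : x = y := by
  by_contra hne
  have hmid : ‖(1 / 2 : ℝ) • x + (1 / 2 : ℝ) • y‖ < r :=
    norm_combo_lt_of_ne hx hy hne (by norm_num) (by norm_num) (by norm_num)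
  have hfmid : f ((1 / 2 : ℝ) • x + (1 / 2 : ℝ) • y) = ‖f‖ * r := by
    simp only [map_add, map_smul, hfx, hfy, smul_eq_mul]
    ring
  have : ‖f‖ * r ≤ ‖f‖ * ‖(1 / 2 : ℝ) • x + (1 / 2 : ℝ) • y‖ :=
    hfmid ▸ (le_abs_self _).trans (f.le_opNorm _)
  exact (mul_lt_mul_of_pos_left hmid (norm_pos_iff.2 hf)).not_ge this

end

theorem mem_range_contractive_projection_iff_duality_general
    {X : Type*} [NormedAddCommGroup X] [NormedSpace ℝ X]
    [StrictConvexSpace ℝ X]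
    (P : X →L[ℝ] X) (hcontr : ∀ z, ‖P z‖ ≤ ‖z‖) (hproj : ∀ z, P (P z) = P z)
    (x : X) :
    x ∈ Set.range P ↔
      ∃ f : StrongDual ℝ X,
        f x = ‖x‖ ^ 2 ∧ ‖f‖ = ‖x‖ ∧ ∀ z, f (P z) = f z := by
  constructor
  · rintro ⟨y, rfl⟩
    exact exists_dual_comp_eq_of_apply_eq_self P hcontr hproj (hproj y)
  · rintro ⟨f, hfx, hfn, hfP⟩
    rcases eq_or_ne f 0 with rfl | hf
    · exact ⟨0, by simpa [eq_comm] using hfn⟩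
    have hfx' : f x = ‖f‖ * ‖x‖ := by rw [hfx, hfn, sq]
    exact ⟨x, eq_of_apply_eq_norm_mul_of_norm_le hf (hcontr x) le_rfl (hfP x ▸ hfx') hfx'⟩

/-- Let `X` be a reflexive real Banach space with `X` and `X*` strictly convex, and let
`P` be a contractive projection on `X`. Then `x ∈ Ran P` if and only if some normalized
duality functional `f` for `x` (i.e. `f(x) = ‖x‖² = ‖f‖²`) satisfies `f ∘ P = f`. -/
theorem mem_range_contractive_projection_iff_duality
    {X : Type*} [NormedAddCommGroup X] [NormedSpace ℝ X] [CompleteSpace X]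
    [StrictConvexSpace ℝ X] [StrictConvexSpace ℝ (StrongDual ℝ X)]
    (hrefl : Function.Surjective (NormedSpace.inclusionInDoubleDual ℝ X))
    (P : X →L[ℝ] X) (hcontr : ∀ z, ‖P z‖ ≤ ‖z‖) (hproj : ∀ z, P (P z) = P z)
    (x : X) :
    x ∈ Set.range P ↔
      ∃ f : StrongDual ℝ X,
        f x = ‖x‖ ^ 2 ∧ ‖f‖ = ‖x‖ ∧ ∀ z, f (P z) = f z :=
  mem_range_contractive_projection_iff_duality_general P hcontr hproj x
end

section
/- Let X be a real normed vector space equipped with a partial order making it an ordered vector space, and assume the norm is strictly monotone on the positive cone: whenever 0 ≤ x ≤ y and x ≠ y, one has ‖x‖ < ‖y‖. Let P : X → X be a linear contraction (‖P(z)‖ ≤ ‖z‖ for all z), let h ∈ X satisfy P(h) = h, and let h₀ ∈ X satisfy 0 ≤ h₀ ≤ h and P(h₀) = 0. Then h₀ = 0. -/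
/-- In an ordered real normed vector space with strictly monotone norm on the positive
cone, if `P` is a linear contraction, `P h = h`, `0 ≤ h₀ ≤ h` and `P h₀ = 0`,
then `h₀ = 0`. -/
theorem contraction_fixed_point_faithful
    {X : Type*} [NormedAddCommGroup X] [NormedSpace ℝ X] [PartialOrder X]
    (hadd : ∀ x y z : X, x ≤ y → x + z ≤ y + z)
    (hsmul : ∀ (c : ℝ) (x : X), 0 ≤ c → 0 ≤ x → 0 ≤ c • x)
    (hmono : ∀ x y : X, 0 ≤ x → x ≤ y → x ≠ y → ‖x‖ < ‖y‖)
    (P : X →ₗ[ℝ] X) (hP : ∀ z : X, ‖P z‖ ≤ ‖z‖)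
    (h h₀ : X) (hfix : P h = h) (h0pos : 0 ≤ h₀) (h0le : h₀ ≤ h) (hP0 : P h₀ = 0) :
    h₀ = 0 := by
  by_contra hne
  have h1 : (0 : X) ≤ h - h₀ := by
    have := hadd h₀ h (-h₀) h0le
    simpa [sub_eq_add_neg] using this
  have h2 : h - h₀ ≤ h := by
    have := hadd 0 h₀ (h - h₀) h0pos
    simpa using this
  have h3 : h - h₀ ≠ h := by
    intro e
    exact hne (by have := sub_eq_self.mp e; simpa using this)
  have hlt : ‖h - h₀‖ < ‖h‖ := hmono _ _ h1 h2 h3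
  have heq : P (h - h₀) = h := by simp [map_sub, hfix, hP0]
  have hle := hP (h - h₀)
  rw [heq] at hle
  linarith
end

section
/- Let (Ω, μ) be a measure space, 1 ≤ p < ∞, and let h ∈ L^p(μ) with h ≥ 0 almost everywhere. Then the set {h·f : f ∈ L^∞(μ)} is dense in the closed subspace {g ∈ L^p(μ) : g = 0 almost everywhere on the set {h = 0}} of L^p(μ). -/
/-!
Take `f n = g / h` on `{|g| ≤ n |h|}` and `0` elsewhere, so `|f n| ≤ n`. Then `h f n - g` is
`0` on that set and `-g` off it: it is dominated by `|g|`, and it vanishes for large `n` at every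
point where `h ≠ 0` and at almost every point where `h = 0`. Dominated convergence in `L^p` gives
`h f n → g`.
-/

open MeasureTheory Filter Topology
open scoped ENNReal

section DominatedConvergence

variable {α E F : Type*} [MeasurableSpace α] {μ : Measure α}
  [NormedAddCommGroup E] [NormedAddCommGroup F]

theorem tendsto_eLpNorm_zero_of_dominated {q : ℝ≥0∞} (hq : q ≠ ∞) {f : ℕ → α → E}
    {g : α → F} (hf : ∀ n, AEStronglyMeasurable (f n) μ) (hg : MemLp g q μ)
    (h_bound : ∀ n, ∀ᵐ x ∂μ, ‖f n x‖ ≤ ‖g x‖)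
    (h_lim : ∀ᵐ x ∂μ, Tendsto (fun n => f n x) atTop (𝓝 0)) :
    Tendsto (fun n => eLpNorm (f n) q μ) atTop (𝓝 0) := by
  rcases eq_or_ne q 0 with rfl | hq0
  · simp
  have hq_pos : 0 < q.toReal := ENNReal.toReal_pos hq0 hq
  suffices Tendsto (fun n => ∫⁻ x, ‖f n x‖ₑ ^ q.toReal ∂μ) atTop (𝓝 0) by
    simp only [eLpNorm_eq_lintegral_rpow_enorm_toReal hq0 hq]
    exact (ENNReal.continuous_rpow_const.tendsto' 0 0 (by simp [hq_pos])).comp this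
  have h_fin : ∫⁻ x, ‖g x‖ₑ ^ q.toReal ∂μ ≠ ∞ :=
    (lintegral_rpow_enorm_lt_top_of_eLpNorm_lt_top hq0 hq hg.eLpNorm_lt_top).ne
  have h_lim' : ∀ᵐ x ∂μ, Tendsto (fun n => ‖f n x‖ₑ ^ q.toReal) atTop (𝓝 0) :=
    h_lim.mono fun x hx =>
      (ENNReal.continuous_rpow_const.tendsto' 0 0 (by simp [hq_pos])).comp (by simpa using hx.enorm)
  simpa using tendsto_lintegral_of_dominated_convergence' _ (fun n => (hf n).enorm.pow_const _)
    (fun n => (h_bound n).mono fun x hx =>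
      ENNReal.rpow_le_rpow (enorm_le_iff_norm_le.2 hx) hq_pos.le) h_fin h_lim'

end DominatedConvergence

section TruncatedQuotient

variable {Ω : Type*} {g h : Ω → ℝ}

noncomputable def truncatedQuotient (g h : Ω → ℝ) (n : ℕ) : Ω → ℝ :=
  {ω | |g ω| ≤ n * |h ω|}.indicator (g / h)

theorem truncatedQuotient_of_le {n : ℕ} {ω : Ω} (hω : |g ω| ≤ n * |h ω|) :
    truncatedQuotient g h n ω = g ω / h ω :=
  Set.indicator_of_mem (s := {ω | |g ω| ≤ n * |h ω|}) hω _

theorem truncatedQuotient_of_not_le {n : ℕ} {ω : Ω} (hω : ¬|g ω| ≤ n * |h ω|) :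
    truncatedQuotient g h n ω = 0 :=
  Set.indicator_of_notMem (s := {ω | |g ω| ≤ n * |h ω|}) hω _

theorem abs_truncatedQuotient_le (n : ℕ) (ω : Ω) : |truncatedQuotient g h n ω| ≤ n := by
  by_cases hω : |g ω| ≤ n * |h ω|
  · rw [truncatedQuotient_of_le hω, abs_div]
    exact div_le_of_le_mul₀ (abs_nonneg _) n.cast_nonneg hω
  · rw [truncatedQuotient_of_not_le hω, abs_zero]
    exact n.cast_nonneg

theorem mul_truncatedQuotient_of_le {n : ℕ} {ω : Ω} (hω : |g ω| ≤ n * |h ω|) :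
    h ω * truncatedQuotient g h n ω = g ω := by
  rw [truncatedQuotient_of_le hω]
  rcases eq_or_ne (h ω) 0 with h0 | h0
  · simp only [h0, abs_zero, mul_zero, abs_nonpos_iff] at hω
    simp [h0, hω]
  · exact mul_div_cancel₀ _ h0

theorem mul_truncatedQuotient_of_not_le {n : ℕ} {ω : Ω} (hω : ¬|g ω| ≤ n * |h ω|) :
    h ω * truncatedQuotient g h n ω = 0 := by
  rw [truncatedQuotient_of_not_le hω, mul_zero]

theorem abs_mul_truncatedQuotient_sub_le (n : ℕ) (ω : Ω) :
    |h ω * truncatedQuotient g h n ω - g ω| ≤ |g ω| := by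
  by_cases hω : |g ω| ≤ n * |h ω|
  · simp [mul_truncatedQuotient_of_le hω]
  · simp [mul_truncatedQuotient_of_not_le hω]

theorem eventually_abs_le_mul_abs {ω : Ω} (hω : h ω = 0 → g ω = 0) :
    ∀ᶠ n : ℕ in atTop, |g ω| ≤ n * |h ω| := by
  rcases eq_or_ne (h ω) 0 with h0 | h0
  · simp [h0, hω h0]
  · obtain ⟨N, hN⟩ := exists_nat_ge (|g ω| / |h ω|)
    filter_upwards [eventually_ge_atTop N] with n hn
    rw [← div_le_iff₀ (abs_pos.2 h0)]
    exact hN.trans (mod_cast hn)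

theorem tendsto_mul_truncatedQuotient_sub {ω : Ω} (hω : h ω = 0 → g ω = 0) :
    Tendsto (fun n => h ω * truncatedQuotient g h n ω - g ω) atTop (𝓝 0) :=
  tendsto_const_nhds.congr' <| (eventually_abs_le_mul_abs hω).mono fun _ hn =>
    (sub_eq_zero.2 (mul_truncatedQuotient_of_le hn)).symm

theorem aestronglyMeasurable_truncatedQuotient [MeasurableSpace Ω] {μ : Measure Ω}
    (hg : AEStronglyMeasurable g μ) (hh : AEStronglyMeasurable h μ) (n : ℕ) :
    AEStronglyMeasurable (truncatedQuotient g h n) μ :=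
  (hg.aemeasurable.div hh.aemeasurable).aestronglyMeasurable.indicator₀ <|
    AEStronglyMeasurable.nullMeasurableSet_le (by fun_prop) (by fun_prop)

theorem memLp_top_truncatedQuotient [MeasurableSpace Ω] {μ : Measure Ω}
    (hg : AEStronglyMeasurable g μ) (hh : AEStronglyMeasurable h μ) (n : ℕ) : MemLp (truncatedQuotient g h n) ∞ μ :=
  memLp_top_of_bound (aestronglyMeasurable_truncatedQuotient hg hh n) n <|
    .of_forall fun ω => abs_truncatedQuotient_le n ω

theorem tendsto_eLpNorm_mul_truncatedQuotient_sub [MeasurableSpace Ω] {μ : Measure Ω}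
    {q : ℝ≥0∞} (hq : q ≠ ∞)
    (hh : AEStronglyMeasurable h μ) (hg : MemLp g q μ) (hsupp : ∀ᵐ ω ∂μ, h ω = 0 → g ω = 0) :
    Tendsto (fun n => eLpNorm (fun ω => h ω * truncatedQuotient g h n ω - g ω) q μ)
      atTop (𝓝 0) :=
  tendsto_eLpNorm_zero_of_dominated hq
    (fun n => (hh.mul (aestronglyMeasurable_truncatedQuotient hg.1 hh n)).sub hg.1) hg
    (fun n => .of_forall fun ω => abs_mul_truncatedQuotient_sub_le n ω)
    (hsupp.mono fun _ => tendsto_mul_truncatedQuotient_sub)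

end TruncatedQuotient

theorem mul_Linfty_dense_in_support_subspace_general
    {Ω : Type*} [MeasurableSpace Ω] (μ : Measure Ω)
    (p : ℝ)
    (h : Ω → ℝ) (hmem : MemLp h (ENNReal.ofReal p) μ)
    (g : Ω → ℝ) (hg : MemLp g (ENNReal.ofReal p) μ)
    (hsupp : ∀ᵐ ω ∂μ, h ω = 0 → g ω = 0)
    (ε : ℝ≥0∞) (hε : 0 < ε) :
    ∃ f : Ω → ℝ, MemLp f ∞ μ ∧
      eLpNorm (fun ω => h ω * f ω - g ω) (ENNReal.ofReal p) μ < ε := by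
  obtain ⟨n, hn⟩ := ((tendsto_eLpNorm_mul_truncatedQuotient_sub ENNReal.ofReal_ne_top
    hmem.1 hg hsupp).eventually (gt_mem_nhds hε)).exists
  exact ⟨truncatedQuotient g h n, memLp_top_truncatedQuotient hg.1 hmem.1 n, hn⟩

/-- Commutative instance of the density lemma: for `1 ≤ p < ∞` and `0 ≤ h ∈ L^p(μ)`,
the set `{h·f : f ∈ L^∞(μ)}` is dense in the subspace of those `g ∈ L^p(μ)` vanishing
almost everywhere on `{h = 0}`. -/
theorem mul_Linfty_dense_in_support_subspace
    {Ω : Type*} [MeasurableSpace Ω] (μ : Measure Ω)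
    (p : ℝ) (hp : 1 ≤ p)
    (h : Ω → ℝ) (hmem : MemLp h (ENNReal.ofReal p) μ) (hpos : 0 ≤ᵐ[μ] h)
    (g : Ω → ℝ) (hg : MemLp g (ENNReal.ofReal p) μ)
    (hsupp : ∀ᵐ ω ∂μ, h ω = 0 → g ω = 0)
    (ε : ℝ≥0∞) (hε : 0 < ε) :
    ∃ f : Ω → ℝ, MemLp f ∞ μ ∧
      eLpNorm (fun ω => h ω * f ω - g ω) (ENNReal.ofReal p) μ < ε :=
  mul_Linfty_dense_in_support_subspace_general μ p h hmem g hg hsupp ε hε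
end
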